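/- arXiv:hep-th/0203179 — 2 statements merged into one kernel-verified Lean document; each statement's English description precedes it below -/
import Mathlib

section
/- In ((ℤ/4ℤ)²)^{11}, among the vectors v with 2v ≠ 0 (i.e. v does not lie in the subgroup of elements killed by 2): the number with Q(v) = 0 is 2^{42} + 2^{31} − 2^{21}; the number with Q(v) = 1 is 2^{42} − 2^{31}; the number with Q(v) = 2 is 2^{42} + 2^{31} − 2^{21}; and the number with Q(v) = 3 is 2^{42} − 2^{31}. -/
/-!
Splitting off one hyperbolic plane turns the counts `#{v | Q v = c}` into a convolution with
the counts for a single plane: over `ℤ/4` the equation `a b = d` has `8, 2, 4, 2` solutions for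
`d = 0, 1, 2, 3`. Solving this linear recurrence gives the Gauss-sum formula
`4 · #{Q = c} = 16^g + (-1)^c 8^g + 2 Re(i^c) 4^g`. The vectors with `2v = 0` have all
coordinates in `2ℤ/4`, so `Q` vanishes on them, and there are `4^g` of them; removing them only
changes the count for `c = 0`.
-/

/-- The quadratic form of `g` orthogonal hyperbolic planes over `ℤ/N`:
`Q(v) = ∑ᵢ aᵢ bᵢ` for `v = ((a₁,b₁),…,(a_g,b_g))`. -/
def hypQ {N g : ℕ} (v : Fin g → ZMod N × ZMod N) : ZMod N :=
  ∑ i, (v i).1 * (v i).2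

noncomputable def hypQCount (N g : ℕ) (c : ZMod N) : ℕ :=
  Nat.card {v : Fin g → ZMod N × ZMod N // hypQ v = c}

theorem hypQ_cons {N g : ℕ} (p : ZMod N × ZMod N) (w : Fin g → ZMod N × ZMod N) :
    hypQ (Fin.cons p w : Fin (g + 1) → ZMod N × ZMod N) = p.1 * p.2 + hypQ w := by
  simp [hypQ, Fin.sum_univ_succ]

theorem hypQCount_zero (N : ℕ) (c : ZMod N) : hypQCount N 0 c = if c = 0 then 1 else 0 := by
  unfold hypQCount hypQ
  split_ifs with hc <;> simp [eq_comm, hc]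

theorem hypQCount_succ (N g : ℕ) [NeZero N] (c : ZMod N) :
    hypQCount N (g + 1) c = ∑ p : ZMod N × ZMod N, hypQCount N g (c - p.1 * p.2) := by
  have e : {v : Fin (g + 1) → ZMod N × ZMod N // hypQ v = c} ≃
      {x : (ZMod N × ZMod N) × (Fin g → ZMod N × ZMod N) // hypQ x.2 = c - x.1.1 * x.1.2} :=
    (Fin.consEquiv fun _ => ZMod N × ZMod N).symm.subtypeEquiv fun v => by
      rw [← Fin.cons_self_tail v, hypQ_cons, eq_sub_iff_add_eq', Fin.cons_self_tail]
      rfl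
  rw [hypQCount, Nat.card_congr (e.trans (Equiv.subtypeProdEquivSigmaSubtype
    fun (p : ZMod N × ZMod N) (w : Fin g → ZMod N × ZMod N) => hypQ w = c - p.1 * p.2)),
    Nat.card_sigma]
  rfl

theorem sum_comp_sub_mul_zmod_four (f : ZMod 4 → ℕ) (c : ZMod 4) :
    ∑ p : ZMod 4 × ZMod 4, f (c - p.1 * p.2) =
      8 * f c + 2 * f (c - 1) + 4 * f (c - 2) + 2 * f (c - 3) := by
  have h4 (h : ZMod 4 → ℕ) : ∑ x, h x = h 0 + h 1 + h 2 + h 3 := Fin.sum_univ_four h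
  simp only [Fintype.sum_prod_type, h4]
  reduce_mod_char
  ring

theorem four_mul_hypQCount_four (g : ℕ) :
    4 * hypQCount 4 g 0 = 16 ^ g + 8 ^ g + 2 * 4 ^ g ∧
    4 * hypQCount 4 g 1 + 8 ^ g = 16 ^ g ∧
    4 * hypQCount 4 g 2 + 2 * 4 ^ g = 16 ^ g + 8 ^ g ∧
    4 * hypQCount 4 g 3 + 8 ^ g = 16 ^ g := by
  induction g with
  | zero => simp only [hypQCount_zero]; decide
  | succ g ih =>
    have step (c : ZMod 4) := (hypQCount_succ 4 g c).trans (sum_comp_sub_mul_zmod_four _ c)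
    simp only [step]
    reduce_mod_char
    simp only [pow_succ]
    omega

theorem hypQ_eq_zero_of_two_smul_eq_zero {g : ℕ} {v : Fin g → ZMod 4 × ZMod 4}
    (hv : 2 • v = 0) : hypQ v = 0 := by
  have hmul : ∀ a b : ZMod 4, 2 • a = 0 → 2 • b = 0 → a * b = 0 := by decide
  refine Finset.sum_eq_zero fun i _ => hmul _ _ ?_ ?_
  · exact congrArg Prod.fst (congrFun hv i)
  · exact congrArg Prod.snd (congrFun hv i)

theorem card_two_smul_eq_zero (g : ℕ) :
    Nat.card {v : Fin g → ZMod 4 × ZMod 4 // 2 • v = 0} = 4 ^ g := by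
  have e : {v : Fin g → ZMod 4 × ZMod 4 // 2 • v = 0} ≃
      ((i : Fin g) → {p : ZMod 4 × ZMod 4 // 2 • p = 0}) :=
    (Equiv.subtypeEquivRight fun v => by simp [funext_iff]).trans Equiv.subtypePiEquivPi
  have h4 : Nat.card {p : ZMod 4 × ZMod 4 // 2 • p = 0} = 4 := by
    rw [Nat.card_eq_fintype_card]; decide
  rw [Nat.card_congr e, Nat.card_pi, h4, Finset.prod_const, Finset.card_univ, Fintype.card_fin]

theorem card_two_smul_eq_zero_hypQ_eq (g : ℕ) (c : ZMod 4) :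
    Nat.card {v : Fin g → ZMod 4 × ZMod 4 // 2 • v = 0 ∧ hypQ v = c} =
      if c = 0 then 4 ^ g else 0 := by
  split_ifs with hc
  · subst hc
    rw [← card_two_smul_eq_zero g]
    exact Nat.card_congr <| Equiv.subtypeEquivRight fun v =>
      and_iff_left_of_imp hypQ_eq_zero_of_two_smul_eq_zero
  · rw [Nat.card_eq_zero]
    left
    exact ⟨fun v => hc (v.2.2 ▸ hypQ_eq_zero_of_two_smul_eq_zero v.2.1)⟩

theorem card_two_smul_ne_zero_add (g : ℕ) (c : ZMod 4) :
    Nat.card {v : Fin g → ZMod 4 × ZMod 4 // 2 • v ≠ 0 ∧ hypQ v = c} +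
      Nat.card {v : Fin g → ZMod 4 × ZMod 4 // 2 • v = 0 ∧ hypQ v = c} = hypQCount 4 g c := by
  classical
  simp only [hypQCount, Nat.card_eq_fintype_card, Fintype.card_subtype]
  conv_rhs => rw [← Finset.card_filter_add_card_filter_not (fun v => 2 • v ≠ 0)]
  simp only [Finset.filter_filter, and_comm, not_not]

theorem four_mul_card_two_smul_ne_zero_hypQ_eq (g : ℕ) :
    4 * Nat.card {v : Fin g → ZMod 4 × ZMod 4 // 2 • v ≠ 0 ∧ hypQ v = 0} + 2 * 4 ^ g =
      16 ^ g + 8 ^ g ∧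
    4 * Nat.card {v : Fin g → ZMod 4 × ZMod 4 // 2 • v ≠ 0 ∧ hypQ v = 1} + 8 ^ g = 16 ^ g ∧
    4 * Nat.card {v : Fin g → ZMod 4 × ZMod 4 // 2 • v ≠ 0 ∧ hypQ v = 2} + 2 * 4 ^ g =
      16 ^ g + 8 ^ g ∧
    4 * Nat.card {v : Fin g → ZMod 4 × ZMod 4 // 2 • v ≠ 0 ∧ hypQ v = 3} + 8 ^ g = 16 ^ g := by
  obtain ⟨h0, h1, h2, h3⟩ := four_mul_hypQCount_four g
  have e0 := card_two_smul_ne_zero_add g 0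
  have e1 := card_two_smul_ne_zero_add g 1
  have e2 := card_two_smul_ne_zero_add g 2
  have e3 := card_two_smul_ne_zero_add g 3
  rw [card_two_smul_eq_zero_hypQ_eq, if_pos rfl] at e0
  rw [card_two_smul_eq_zero_hypQ_eq, if_neg (by decide)] at e1 e2 e3
  omega

/-- In `((ℤ/4)²)^{11}`, among the vectors `v` of exact order 4 (i.e. `2v ≠ 0`):
the number with `Q(v) = 0` is `2^42 + 2^31 − 2^21`, with `Q(v) = 1` is
`2^42 − 2^31`, with `Q(v) = 2` is `2^42 + 2^31 − 2^21`, and with `Q(v) = 3`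
is `2^42 − 2^31`. -/
theorem su4_block_count :
    Nat.card {v : Fin 11 → ZMod 4 × ZMod 4 // 2 • v ≠ 0 ∧ hypQ v = 0}
      = 2 ^ 42 + 2 ^ 31 - 2 ^ 21 ∧
    Nat.card {v : Fin 11 → ZMod 4 × ZMod 4 // 2 • v ≠ 0 ∧ hypQ v = 1}
      = 2 ^ 42 - 2 ^ 31 ∧
    Nat.card {v : Fin 11 → ZMod 4 × ZMod 4 // 2 • v ≠ 0 ∧ hypQ v = 2}
      = 2 ^ 42 + 2 ^ 31 - 2 ^ 21 ∧
    Nat.card {v : Fin 11 → ZMod 4 × ZMod 4 // 2 • v ≠ 0 ∧ hypQ v = 3}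
      = 2 ^ 42 - 2 ^ 31 := by
  obtain ⟨h0, h1, h2, h3⟩ := four_mul_card_two_smul_ne_zero_hypQ_eq 11
  norm_num only at h0 h1 h2 h3 ⊢
  omega
end

section
/- (Hecke-transform closed form, N prime.) For every prime N and every τ in the complex upper half-plane ℍ: n_0·Z_0(τ) + ∑_{j=1}^{N−1} n_j·Z_j(τ) + Z_t(τ) = (1/N²)·( N^{23}·G_0(τ) + N^{12}·∑_{b=1}^{N−1} G_b(τ) + H_0(τ) ), i.e. the sum over all 't Hooft fluxes equals (1/N²)·∑_{a,d ≥ 1, ad = N, 0 ≤ b < d} d^{12}·gcd(b,d)^{11}·η((aτ+b)/d)^{−24} (with gcd(0,d) = d), where n_0 = N^{21} + (N−1)N^{10} − 1 and n_j = N^{21} − N^{10} for 1 ≤ j ≤ N−1. -/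
/-!
The `Z_j` are the discrete Fourier transform of the `G_k`, so orthogonality of the `N`-th roots
of unity gives `∑_{j<N} Z_j = G_0`, while `Z_0 = (1/N) ∑_{k<N} G_k`. After these two
substitutions both sides are linear combinations of `G_0`, `∑_{b=1}^{N-1} G_b` and `H_0` with
equal coefficients.
-/

/-- The Dedekind eta function on the upper half-plane,
`η(τ) = exp(πiτ/12) · ∏_{n=1}^∞ (1 − exp(2πinτ))`. -/
noncomputable def dedekindEta (τ : ℂ) : ℂ :=
  Complex.exp (Real.pi * Complex.I * τ / 12) *
    ∏' n : ℕ, (1 - Complex.exp (2 * Real.pi * Complex.I * (n + 1) * τ))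

/-- `G_j(τ) = η((τ+j)/N)^{−24}`. -/
noncomputable def suG (N j : ℕ) (τ : ℂ) : ℂ :=
  (dedekindEta ((τ + (j : ℂ)) / (N : ℂ)) ^ 24)⁻¹

/-- `H₀(τ) = η(Nτ)^{−24}`. -/
noncomputable def suH (N : ℕ) (τ : ℂ) : ℂ :=
  (dedekindEta ((N : ℂ) * τ) ^ 24)⁻¹

/-- `Z_j(τ) = (1/N)·∑_{k=0}^{N−1} e^{−2πijk/N} G_k(τ)`, the Vafa–Witten
partition function of `SU(N)/ℤ_N` on K3 with ’t Hooft flux of type `j`. -/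
noncomputable def suZ (N j : ℕ) (τ : ℂ) : ℂ :=
  (1 / (N : ℂ)) * ∑ k ∈ Finset.range N,
    Complex.exp (-2 * Real.pi * Complex.I * (j : ℂ) * (k : ℂ) / (N : ℂ)) * suG N k τ

/-- `Z_t(τ) = (1/N²)·H₀(τ) + Z_0(τ)`, the `SU(N)` (trivial flux) partition
function on K3. -/
noncomputable def suZt (N : ℕ) (τ : ℂ) : ℂ :=
  (1 / (N : ℂ) ^ 2) * suH N τ + suZ N 0 τ

open Finset

theorem IsPrimitiveRoot.sum_range_pow_pow {K : Type*} [Field K] {ζ : K} {N k : ℕ}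
    (hζ : IsPrimitiveRoot ζ N) (hk : k < N) :
    ∑ j ∈ range N, (ζ ^ k) ^ j = if k = 0 then (N : K) else 0 := by
  split_ifs with hk0
  · simp [hk0]
  · rw [geom_sum_eq (hζ.pow_ne_one_of_pos_of_lt hk0 hk), pow_right_comm, hζ.pow_eq_one, one_pow,
      sub_self, zero_div]

theorem Complex.exp_neg_two_pi_I_mul_mul_div_eq_pow (N j k : ℕ) :
    Complex.exp (-2 * Real.pi * Complex.I * j * k / N)
      = ((Complex.exp (2 * Real.pi * Complex.I / N))⁻¹ ^ k) ^ j := by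
  rw [← Complex.exp_neg, ← Complex.exp_nat_mul, ← Complex.exp_nat_mul]
  congr 1
  ring

theorem sum_Icc_one_sub_one_eq_sum_range_sub {M : Type*} [AddCommGroup M] {N : ℕ} (hN : N ≠ 0)
    (f : ℕ → M) :
    ∑ j ∈ Icc 1 (N - 1), f j = ∑ j ∈ range N, f j - f 0 := by
  rw [sum_range_eq_add_Ico f (Nat.pos_of_ne_zero hN),
    Icc_sub_one_right_eq_Ico_of_not_isMin (by simpa [isMin_iff_eq_bot] using hN),
    add_sub_cancel_left]

theorem suZ_zero (N : ℕ) (τ : ℂ) :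
    suZ N 0 τ = (1 / (N : ℂ)) * ∑ k ∈ range N, suG N k τ := by
  simp [suZ]

theorem sum_suZ_eq_suG_zero {N : ℕ} (hN : N ≠ 0) (τ : ℂ) :
    ∑ j ∈ range N, suZ N j τ = suG N 0 τ := by
  have hζ := (Complex.isPrimitiveRoot_exp N hN).inv
  simp_rw [suZ, ← mul_sum]
  rw [sum_comm]
  simp_rw [← sum_mul, Complex.exp_neg_two_pi_I_mul_mul_div_eq_pow]
  rw [sum_congr rfl fun k hk => by rw [hζ.sum_range_pow_pow (mem_range.1 hk)]]
  simp_rw [ite_mul, zero_mul, sum_ite_eq', mem_range, if_pos (Nat.pos_of_ne_zero hN)]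
  field_simp

theorem suN_flux_sum_hecke_general (N : ℕ) (hN : N.Prime) (τ : ℂ) :
    ((N : ℂ) ^ 21 + ((N : ℂ) - 1) * (N : ℂ) ^ 10 - 1) * suZ N 0 τ
        + ∑ j ∈ Finset.Icc 1 (N - 1), ((N : ℂ) ^ 21 - (N : ℂ) ^ 10) * suZ N j τ
        + suZt N τ
      = (1 / (N : ℂ) ^ 2) *
        ((N : ℂ) ^ 23 * suG N 0 τ
          + (N : ℂ) ^ 12 * ∑ b ∈ Finset.Icc 1 (N - 1), suG N b τ
          + suH N τ) := by
  have hN0 : (N : ℂ) ≠ 0 := Nat.cast_ne_zero.2 hN.ne_zero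
  rw [suZt, ← mul_sum, sum_Icc_one_sub_one_eq_sum_range_sub hN.ne_zero,
    sum_Icc_one_sub_one_eq_sum_range_sub hN.ne_zero, sum_suZ_eq_suG_zero hN.ne_zero, suZ_zero]
  field_simp
  ring

/-- Hecke-transform closed form for prime `N`: the sum over all ’t Hooft
fluxes equals `(1/N²)( N^23 G₀(τ) + N^12 ∑_{b=1}^{N−1} G_b(τ) + H₀(τ) )`. -/
theorem suN_flux_sum_hecke (N : ℕ) (hN : N.Prime) (τ : ℂ) (hτ : 0 < τ.im) :
    ((N : ℂ) ^ 21 + ((N : ℂ) - 1) * (N : ℂ) ^ 10 - 1) * suZ N 0 τ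
        + ∑ j ∈ Finset.Icc 1 (N - 1), ((N : ℂ) ^ 21 - (N : ℂ) ^ 10) * suZ N j τ
        + suZt N τ
      = (1 / (N : ℂ) ^ 2) *
        ((N : ℂ) ^ 23 * suG N 0 τ
          + (N : ℂ) ^ 12 * ∑ b ∈ Finset.Icc 1 (N - 1), suG N b τ
          + suH N τ) :=
  suN_flux_sum_hecke_general N hN τ
end
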